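/- arXiv:0904.0562 — 4 statements merged into one kernel-verified Lean document; each statement's English description precedes it below -/
import Mathlib

section
/- For any word u over a two-letter alphabet, the derivative of the reversal equals the reversal of the derivative: D(ũ) = (D(u))~, where ũ denotes the mirror image of u. -/
/-- Run-length encoding Δ: the list of lengths of maximal runs. -/
def rle (w : List ℕ) : List ℕ := (w.splitBy (· == ·)).map List.length

/-- Trim the first entry if it is less than `b`. -/
def trimF (b : ℕ) : List ℕ → List ℕ
  | [] => []
  | x :: xs => if x < b then xs else x :: xs

/-- The derivative D: run lengths, dropping boundary runs shorter than `b`. -/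
def derW (b : ℕ) (w : List ℕ) : List ℕ :=
  (trimF b ((trimF b (rle w)).reverse)).reverse

/-- `w` is a word over the alphabet `{a, b}`. -/
def WordOver (a b : ℕ) (w : List ℕ) : Prop := ∀ c ∈ w, c = a ∨ c = b

/-- `w` is differentiable: all runs have length at most `b`, and all
interior runs have length exactly `a` or `b`. -/
def DiffW (a b : ℕ) (w : List ℕ) : Prop :=
  (∀ t ∈ rle w, t ≤ b) ∧ (∀ t ∈ ((rle w).drop 1).dropLast, t = a ∨ t = b)

/-- The closure ŵ: extend the first (resp. last) run to length `b`
if its length is strictly greater than `a`. -/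
def clos (a b : ℕ) (w : List ℕ) : List ℕ :=
  (if a < (rle w).headD 0 then List.replicate (b - (rle w).headD 0) (w.headD 0) else [])
    ++ w ++
  (if a < (rle w).getLastD 0 then List.replicate (b - (rle w).getLastD 0) (w.getLastD 0) else [])

/-- ρ(w) = D(ŵ). -/
def rhoW (a b : ℕ) (w : List ℕ) : List ℕ := derW b (clos a b w)

/-- `w` is a smooth (C^∞_{a,b}) word: it is a word over `{a,b}`, every iterated
closure is differentiable, and iterating ρ eventually yields the empty word. -/
def SmoothW (a b : ℕ) (w : List ℕ) : Prop :=
  WordOver a b w ∧ (∀ k : ℕ, DiffW a b (clos a b ((rhoW a b)^[k] w))) ∧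
    ∃ k : ℕ, (rhoW a b)^[k] w = []

/-- n-th power of a word (n-fold concatenation). -/
def lpow (u : List ℕ) (n : ℕ) : List ℕ := (List.replicate n u).flatten

/-- The pseudo-inverse Δ_α^{-1}: maps u₁u₂u₃⋯ to α^{u₁} β^{u₂} α^{u₃} ⋯ . -/
def dinv (α β : ℕ) : List ℕ → List ℕ
  | [] => []
  | t :: ts => List.replicate t α ++ dinv β α ts

/-! Reversing a word reverses its list of runs: with a symmetric relation, the characterization
`List.splitBy_eq_iff` of the runs is invariant under reversal. Dropping short runs at both ends
is symmetric too, and the derivative is the composite of the two operations. -/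

theorem List.splitBy_reverse {α : Type*} {r : α → α → Bool} (hr : ∀ x y, r x y = r y x)
    (l : List α) : l.reverse.splitBy r = ((l.splitBy r).map List.reverse).reverse := by
  rw [List.splitBy_eq_iff]
  refine ⟨by rw [← List.reverse_flatten, List.flatten_splitBy], by simp, ?_, ?_⟩
  · simp only [List.mem_reverse, List.mem_map]
    rintro _ ⟨m, hm, rfl⟩
    exact List.isChain_reverse.2 ((List.isChain_of_mem_splitBy hm).imp fun x y h => hr x y ▸ h)
  · rw [List.isChain_reverse, List.isChain_map]
    refine (List.isChain_getLast_head_splitBy r l).imp ?_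
    rintro m n ⟨hm, hn, h⟩
    exact ⟨by simpa using hn, by simpa using hm, by simpa [hr] using h⟩

theorem rle_reverse (w : List ℕ) : rle w.reverse = (rle w).reverse := by
  simp [rle, List.splitBy_reverse (fun _ _ => BEq.comm), Function.comp_def]

def trimEnds (b : ℕ) (L : List ℕ) : List ℕ := (trimF b ((trimF b L).reverse)).reverse

theorem derW_eq_trimEnds_rle (b : ℕ) (w : List ℕ) : derW b w = trimEnds b (rle w) := rfl

theorem trimEnds_reverse (b : ℕ) (L : List ℕ) :
    trimEnds b L.reverse = (trimEnds b L).reverse := by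
  rcases L with _ | ⟨x, M⟩
  · rfl
  rcases M.eq_nil_or_concat with rfl | ⟨M', y, rfl⟩
  · by_cases hx : x < b <;> simp [trimEnds, trimF, hx]
  · by_cases hx : x < b <;> by_cases hy : y < b <;> simp [trimEnds, trimF, hx, hy]

theorem stmt1_general (b : ℕ) (u : List ℕ) :
    derW b u.reverse = (derW b u).reverse := by
  rw [derW_eq_trimEnds_rle, rle_reverse, trimEnds_reverse, derW_eq_trimEnds_rle]

theorem stmt1 (a b : ℕ) (ha : 0 < a) (hab : a < b) (u : List ℕ)
    (hw : WordOver a b u) :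
    derW b u.reverse = (derW b u).reverse :=
  stmt1_general b u
end

section
/- If w is a differentiable word over {a,b} and u is a factor of w, then D(u) is a factor of D(w). -/
/-!
Run-length encoding commutes with reversal, and deleting the first letter of a word only
decrements its first run, deleting it if it had length 1. When all runs have length at most `b`,
a decremented first run is shorter than `b` and is trimmed by the derivative, so `D(w.tail)` is a
suffix of `D(w)`. Iterating, `D` maps suffixes to suffixes; by reversal it maps prefixes to
prefixes, and a factor is a prefix of a suffix.
-/

namespace List

variable {α : Type*} {r : α → α → Bool}

theorem splitBy_reverse_s3 (hr : ∀ x y, r x y = r y x) (l : List α) :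
    l.reverse.splitBy r = ((l.splitBy r).map reverse).reverse := by
  rw [splitBy_eq_iff, ← reverse_flatten, flatten_splitBy]
  refine ⟨rfl, by simp [nil_notMem_splitBy r l], ?_, ?_⟩
  · simp only [mem_reverse, mem_map, forall_exists_index, and_imp]
    rintro _ g hg rfl
    exact isChain_reverse.2 ((isChain_of_mem_splitBy hg).imp fun x y h => by rwa [hr])
  · rw [isChain_reverse, isChain_map]
    refine (isChain_getLast_head_splitBy r l).imp ?_
    rintro g g' ⟨hg, hg', h⟩
    refine ⟨by simpa using hg', by simpa using hg, ?_⟩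
    rwa [getLast_reverse, head_reverse, hr]

theorem splitBy_tail {l g : List α} {gs : List (List α)} (h : l.splitBy r = g :: gs) :
    l.tail.splitBy r = if g.tail = [] then gs else g.tail :: gs := by
  obtain ⟨rfl, hn, hc, hc'⟩ := splitBy_eq_iff.1 h
  rcases g with _ | ⟨c, g⟩
  · exact absurd mem_cons_self hn
  rw [mem_cons, not_or] at hn
  rw [isChain_cons] at hc'
  rw [tail_cons, flatten_cons, cons_append, tail_cons]
  by_cases hg : g = []
  · subst hg
    exact splitBy_eq_iff.2 ⟨rfl, hn.2, fun m hm => hc m (mem_cons_of_mem _ hm), hc'.2⟩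
  rw [if_neg hg]
  refine splitBy_eq_iff.2 ⟨rfl, by simp [hg, hn.2], ?_, isChain_cons.2 ⟨?_, hc'.2⟩⟩
  · rintro m (_ | ⟨_, hm⟩)
    · exact (hc _ mem_cons_self).tail
    · exact hc m (mem_cons_of_mem _ hm)
  · rintro g' hg'
    obtain ⟨_, hb, hr⟩ := hc'.1 g' hg'
    exact ⟨hg, hb, by rwa [getLast_cons hg] at hr⟩

end List

theorem rle_eq_nil {w : List ℕ} : rle w = [] ↔ w = [] := by
  rw [rle, List.map_eq_nil_iff, List.splitBy_eq_nil]

theorem pos_of_mem_rle {w : List ℕ} {t : ℕ} (ht : t ∈ rle w) : 0 < t := by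
  obtain ⟨g, hg, rfl⟩ := List.mem_map.1 ht
  exact List.length_pos_iff.2 (List.ne_nil_of_mem_splitBy hg)

theorem rle_tail {w t : List ℕ} {x : ℕ} (h : rle w = x :: t) :
    rle w.tail = if x = 1 then t else (x - 1) :: t := by
  obtain ⟨g, gs, hw, rfl, rfl⟩ := List.map_eq_cons_iff.1 h
  rw [rle, List.splitBy_tail hw]
  rcases g with _ | ⟨c, g⟩
  · exact absurd (hw ▸ List.mem_cons_self) (List.nil_notMem_splitBy _ w)
  · by_cases hg : g = [] <;> simp [hg]

section RunBound

variable {b : ℕ} {v w : List ℕ}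

theorem rle_tail_le (hw : ∀ t ∈ rle w, t ≤ b) : ∀ t ∈ rle w.tail, t ≤ b := by
  cases h : rle w with
  | nil => simp [rle_eq_nil.1 h, rle]
  | cons x t =>
    rw [h] at hw
    rw [rle_tail h]
    split_ifs
    · exact fun s hs => hw s (List.mem_cons_of_mem x hs)
    · rintro s (_ | ⟨_, hs⟩)
      · exact (Nat.sub_le x 1).trans (hw x List.mem_cons_self)
      · exact hw s (List.mem_cons_of_mem x hs)

theorem rle_le_of_suffix (hw : ∀ t ∈ rle w, t ≤ b) (h : v <:+ w) : ∀ t ∈ rle v, t ≤ b := by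
  rw [List.suffix_iff_eq_drop.1 h]
  induction w.length - v.length with
  | zero => simpa using hw
  | succ k ih => rw [← List.tail_drop]; exact rle_tail_le ih

end RunBound

def trimLast (b : ℕ) (r : List ℕ) : List ℕ := (trimF b r.reverse).reverse

section Trim

variable (b : ℕ)

@[simp]
theorem trimF_nil : trimF b [] = [] := rfl

@[simp]
theorem trimF_cons (x : ℕ) (t : List ℕ) :
    trimF b (x :: t) = if x < b then t else x :: t := rfl

theorem trimF_suffix (r : List ℕ) : trimF b r <:+ r := by
  cases r with
  | nil => exact List.suffix_rfl
  | cons x t => rw [trimF_cons]; split_ifs <;> simp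

theorem suffix_trimF_cons (x : ℕ) (t : List ℕ) : t <:+ trimF b (x :: t) := by
  rw [trimF_cons]; split_ifs <;> simp

theorem List.IsPrefix.trimF {s r : List ℕ} (h : s <+: r) :
    _root_.trimF b s <+: _root_.trimF b r := by
  cases s with
  | nil => exact List.nil_prefix
  | cons x s =>
    obtain ⟨t, rfl⟩ := h
    rw [List.cons_append, trimF_cons, trimF_cons]; split_ifs <;> simp

theorem List.IsSuffix.trimLast {s r : List ℕ} (h : s <:+ r) :
    _root_.trimLast b s <:+ _root_.trimLast b r :=
  List.reverse_prefix.1 (by simpa [_root_.trimLast] using (List.reverse_prefix.2 h).trimF b)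

theorem trimLast_concat (m : List ℕ) (y : ℕ) :
    trimLast b (m ++ [y]) = if y < b then m else m ++ [y] := by
  unfold trimLast; split_ifs <;> simp [*]

theorem trimLast_cons (x : ℕ) {t : List ℕ} (ht : t ≠ []) :
    trimLast b (x :: t) = x :: trimLast b t := by
  obtain ⟨m, y, rfl⟩ := (List.eq_nil_or_concat' t).resolve_left ht
  rw [← List.cons_append, trimLast_concat, trimLast_concat]
  split_ifs <;> rfl

theorem trimF_trimLast (r : List ℕ) : trimF b (trimLast b r) = trimLast b (trimF b r) := by
  rcases r with _ | ⟨x, t⟩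
  · rfl
  rcases eq_or_ne t [] with rfl | ht
  · by_cases x < b <;> simp [trimLast, *]
  · rw [trimLast_cons b x ht, trimF_cons, trimF_cons]
    split_ifs <;> simp [trimLast_cons b x ht]

end Trim

theorem derW_eq_trimLast (b : ℕ) (w : List ℕ) : derW b w = trimLast b (trimF b (rle w)) := rfl

theorem derW_reverse (b : ℕ) (w : List ℕ) : derW b w.reverse = (derW b w).reverse := by
  rw [derW_eq_trimLast, derW_eq_trimLast, rle_reverse, ← trimF_trimLast b (rle w)]
  rfl

section Derivative

variable {b : ℕ} {v w : List ℕ}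

theorem trimF_rle_tail_suffix (hw : ∀ t ∈ rle w, t ≤ b) :
    trimF b (rle w.tail) <:+ trimF b (rle w) := by
  cases h : rle w with
  | nil => simp [rle_eq_nil.1 h, rle]
  | cons x t =>
    have hx : x ∈ rle w := h ▸ List.mem_cons_self
    have hx_pos := pos_of_mem_rle hx
    have hx_le := hw x hx
    rw [rle_tail h]
    split_ifs
    · exact (trimF_suffix b t).trans (suffix_trimF_cons b x t)
    · rw [trimF_cons, if_pos (by omega)]
      exact suffix_trimF_cons b x t

theorem derW_tail_suffix (hw : ∀ t ∈ rle w, t ≤ b) : derW b w.tail <:+ derW b w :=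
  (trimF_rle_tail_suffix hw).trimLast b

theorem derW_suffix_of_suffix (hw : ∀ t ∈ rle w, t ≤ b) (h : v <:+ w) :
    derW b v <:+ derW b w := by
  rw [List.suffix_iff_eq_drop.1 h]
  induction w.length - v.length with
  | zero => rw [List.drop_zero]
  | succ k ih =>
    rw [← List.tail_drop]
    exact (derW_tail_suffix (rle_le_of_suffix hw (List.drop_suffix k w))).trans ih

theorem derW_prefix_of_prefix (hw : ∀ t ∈ rle w, t ≤ b) (h : v <+: w) :
    derW b v <+: derW b w := by
  have hw' : ∀ t ∈ rle w.reverse, t ≤ b := by simpa [rle_reverse] using hw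
  have := derW_suffix_of_suffix hw' (List.reverse_suffix.2 h)
  rwa [derW_reverse, derW_reverse, List.reverse_suffix] at this

end Derivative

theorem stmt3_general (a b : ℕ) (w u : List ℕ)
    (hw : DiffW a b w) (hu : u <:+: w) :
    derW b u <:+: derW b w := by
  obtain ⟨v, huv, hvw⟩ := List.infix_iff_prefix_suffix.1 hu
  exact List.infix_iff_prefix_suffix.2
    ⟨derW b v, derW_prefix_of_prefix (rle_le_of_suffix hw.1 hvw) huv,
      derW_suffix_of_suffix hw.1 hvw⟩

theorem stmt3 (a b : ℕ) (ha : 0 < a) (hab : a < b) (w u : List ℕ)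
    (hw : DiffW a b w) (hwo : WordOver a b w) (hu : u <:+: w) :
    derW b u <:+: derW b w :=
  stmt3_general a b w u hw hu
end

section
/- Over the alphabet {1,3}, the word ((1³)·3·1·3·(1³)·3)⁴ = (111313111 3)⁴ is a smooth word; hence there exist smooth biquadrates (fourth powers) over {1,3}, and by applying the inverse run-length operators there are infinitely many smooth fourth powers over {1,3}. -/
/-!
Write `Δ⁻¹ z = 3^{z₁} 1^{z₂} 3^{z₃} ⋯` for `dinv 3 1`. When `z` is a word over `{1, 3}`, the runs
of `Δ⁻¹ z` are exactly the letters of `z`, so `Δ⁻¹ z` is differentiable, equals its own closure,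
and `ρ (Δ⁻¹ z)` is `z` with a boundary letter `1` removed at either end. Hence `Δ⁻¹ z` is smooth
as soon as that trimmed word is.

Iterating `Δ⁻¹` on `w = (1113131113)⁴` keeps it a fourth power, because the letters `1` and `3`
are odd and so the period keeps even length, and the period grows strictly. Moreover
`Δ⁻¹^[n+1] w = Zₙ 1`, where `Zₙ = Δ⁻¹^[n] Z₀` has odd length and starts with `3`; then
`Δ⁻¹ Zₙ` starts and ends with `3`, so `ρ Zₙ₊₂ = Zₙ₊₁`. Smoothness of the whole family thus
reduces to four finite checks on `w`, `Z₀` and their trimmed versions.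
-/

namespace SmoothWords

open List

lemma rle_replicate_append {k a : ℕ} {l : List ℕ} (hk : 0 < k) (h : ∀ b ∈ l.head?, a ≠ b) :
    rle (replicate k a ++ l) = k :: rle l := by
  have hrun : (replicate k a).splitBy (· == ·) = [replicate k a] :=
    splitBy_of_isChain (by simp; omega) (isChain_replicate_of_rel k (by simp))
  unfold rle
  rw [splitBy_append (by simpa [getLast?_replicate, hk.ne'] using h), hrun]
  simp

section Dinv

variable {α β : ℕ}

lemma dinv_cons (t : ℕ) (ts : List ℕ) :
    dinv α β (t :: ts) = replicate t α ++ dinv β α ts := rfl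

lemma length_dinv (z : List ℕ) : (dinv α β z).length = z.sum := by
  induction z generalizing α β <;> simp [dinv, *]

lemma mem_dinv {z : List ℕ} {c : ℕ} (hc : c ∈ dinv α β z) : c = α ∨ c = β := by
  induction z generalizing α β with
  | nil => simp [dinv] at hc
  | cons t ts ih =>
    rcases mem_append.mp hc with hc | hc
    · exact .inl (eq_of_mem_replicate hc)
    · exact (ih hc).symm

lemma head?_dinv {z : List ℕ} (hne : z ≠ []) (hz : ∀ t ∈ z, 0 < t) :
    (dinv α β z).head? = some α := by
  obtain ⟨t, ts, rfl⟩ := exists_cons_of_ne_nil hne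
  obtain ⟨t, rfl⟩ := Nat.exists_eq_add_one_of_ne_zero (hz t mem_cons_self).ne'
  rfl

lemma dinv_append (u v : List ℕ) :
    dinv α β (u ++ v) = dinv α β u ++ if Even u.length then dinv α β v else dinv β α v := by
  induction u generalizing α β with
  | nil => simp [dinv]
  | cons t ts ih =>
    rw [cons_append, dinv_cons, ih, dinv_cons, append_assoc]
    by_cases h : Even ts.length <;> simp [h, Nat.even_add_one]

lemma dinv_lpow {u : List ℕ} (hu : Even u.length) (n : ℕ) :
    dinv α β (lpow u n) = lpow (dinv α β u) n := by
  induction n with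
  | zero => rfl
  | succ n ih =>
    simp only [lpow, replicate_succ, flatten_cons] at ih ⊢
    rw [dinv_append, if_pos hu, ih]

lemma getLast?_dinv_append_singleton (u : List ℕ) {t : ℕ} (ht : 0 < t) :
    (dinv α β (u ++ [t])).getLast? = some (if Even u.length then α else β) := by
  obtain ⟨t, rfl⟩ := Nat.exists_eq_add_one_of_ne_zero ht.ne'
  rw [dinv_append]
  split_ifs <;> simp [dinv, replicate_succ', getLast?_append]

lemma rle_dinv (hαβ : α ≠ β) {z : List ℕ} (hz : ∀ t ∈ z, 0 < t) : rle (dinv α β z) = z := by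
  induction z generalizing α β with
  | nil => rfl
  | cons t ts ih =>
    have hts : ∀ x ∈ ts, 0 < x := fun x hx => hz x (mem_cons_of_mem _ hx)
    rw [dinv_cons, rle_replicate_append (hz t mem_cons_self), ih hαβ.symm hts]
    cases ts with
    | nil => simp [dinv]
    | cons t' ts => simpa [head?_dinv (cons_ne_nil t' ts) hts] using hαβ

lemma even_length_dinv_iff {z : List ℕ} (hz : ∀ t ∈ z, Odd t) :
    Even (dinv α β z).length ↔ Even z.length := by
  rw [length_dinv]
  induction z with
  | nil => simp
  | cons t ts ih =>
    rw [sum_cons, length_cons, Nat.even_add, Nat.even_add_one,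
      ih (fun x hx => hz x (mem_cons_of_mem _ hx))]
    simp [Nat.not_even_iff_odd.mpr (hz t mem_cons_self)]

lemma length_lt_length_dinv {z : List ℕ} (hz : ∀ t ∈ z, 0 < t) (h : ∃ t ∈ z, 1 < t) :
    z.length < (dinv α β z).length := by
  rw [length_dinv]
  simpa using List.sum_lt_sum (l := z) (fun _ => 1) id hz h

end Dinv

instance (a b : ℕ) (w : List ℕ) : Decidable (WordOver a b w) := by
  unfold WordOver; infer_instance

instance (a b : ℕ) (w : List ℕ) : Decidable (DiffW a b w) := by
  unfold DiffW; infer_instance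

section Smooth

variable {a b : ℕ}

lemma WordOver.pos {w : List ℕ} (h : WordOver a b w) (ha : 0 < a) (hb : 0 < b) :
    ∀ t ∈ w, 0 < t := fun t ht => by rcases h t ht with rfl | rfl <;> assumption

lemma WordOver.odd {w : List ℕ} (h : WordOver a b w) (ha : Odd a) (hb : Odd b) :
    ∀ t ∈ w, Odd t := fun t ht => by rcases h t ht with rfl | rfl <;> assumption

lemma wordOver_dinv {α β : ℕ} (z : List ℕ) : WordOver β α (dinv α β z) :=
  fun _ hc => (mem_dinv hc).symm

def SmoothChain (a b : ℕ) (w : List ℕ) : Prop :=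
  (∀ k, DiffW a b (clos a b ((rhoW a b)^[k] w))) ∧ ∃ k, (rhoW a b)^[k] w = []

lemma rhoW_nil : rhoW a b [] = [] := by
  simp [rhoW, clos, derW, rle, trimF]

lemma smoothChain_of_iterate_eq_nil {w : List ℕ} (K : ℕ)
    (hdiff : ∀ k < K, DiffW a b (clos a b ((rhoW a b)^[k] w)))
    (hnil : (rhoW a b)^[K] w = []) : SmoothChain a b w := by
  refine ⟨fun k => ?_, K, hnil⟩
  rcases lt_or_ge k K with hk | hk
  · exact hdiff k hk
  · obtain ⟨j, rfl⟩ := Nat.exists_eq_add_of_le hk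
    rw [add_comm, Function.iterate_add_apply, hnil, Function.iterate_fixed rhoW_nil]
    simp [DiffW, clos, rle]

lemma SmoothChain.of_rhoW {w : List ℕ} (hdiff : DiffW a b (clos a b w))
    (h : SmoothChain a b (rhoW a b w)) : SmoothChain a b w := by
  obtain ⟨hk, K, hK⟩ := h
  refine ⟨fun k => ?_, K + 1, hK⟩
  cases k with
  | zero => exact hdiff
  | succ k => exact hk k

lemma clos_eq_self {v : List ℕ} (h : WordOver a b (rle v)) : clos a b v = v := by
  have pad : ∀ t, t = 0 ∨ t = a ∨ t = b → ∀ x : ℕ,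
      (if a < t then replicate (b - t) x else []) = [] := by
    rintro t (rfl | rfl | rfl) x <;> simp
  have ends : ∀ t ∈ [(rle v).headD 0, (rle v).getLastD 0], t = 0 ∨ t = a ∨ t = b := by
    cases hv : rle v with
    | nil => simp
    | cons t ts =>
      rw [hv] at h
      simp only [headD_cons, getLastD_eq_getLast?, getLast?_eq_some_getLast (cons_ne_nil t ts),
        Option.getD_some, mem_cons, not_mem_nil, or_false]
      rintro s (rfl | rfl)
      exacts [.inr (h _ mem_cons_self), .inr (h _ (getLast_mem _))]
  unfold clos
  rw [pad _ (ends _ (by simp)), pad _ (ends _ (by simp))]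
  simp

lemma diffW_of_wordOver_rle (hab : a ≤ b) {v : List ℕ} (h : WordOver a b (rle v)) :
    DiffW a b v :=
  ⟨fun t ht => by rcases h t ht with rfl | rfl <;> omega,
    fun t ht => h t (drop_subset _ _ (dropLast_subset _ ht))⟩

def trimEnds (b : ℕ) (z : List ℕ) : List ℕ := (trimF b ((trimF b z).reverse)).reverse

lemma derW_eq_trimEnds_rle (w : List ℕ) : derW b w = trimEnds b (rle w) := rfl

variable {α β : ℕ}

lemma rhoW_dinv (hαβ : α ≠ β) (ha : 0 < a) (hb : 0 < b) {z : List ℕ} (hz : WordOver a b z) :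
    rhoW a b (dinv α β z) = trimEnds b z := by
  have hrle : rle (dinv α β z) = z := rle_dinv hαβ (WordOver.pos hz ha hb)
  rw [rhoW, clos_eq_self (by rwa [hrle]), derW_eq_trimEnds_rle, hrle]

lemma smoothChain_dinv_of_trimEnds (hab : a ≤ b) (ha : 0 < a) (hαβ : α ≠ β) {z : List ℕ}
    (hz : WordOver a b z) (h : SmoothChain a b (trimEnds b z)) :
    SmoothChain a b (dinv α β z) := by
  have hrle : rle (dinv α β z) = z := rle_dinv hαβ (WordOver.pos hz ha (ha.trans_le hab))
  refine .of_rhoW ?_ (by rwa [rhoW_dinv hαβ ha (ha.trans_le hab) hz])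
  rw [clos_eq_self (by rwa [hrle])]
  exact diffW_of_wordOver_rle hab (by rwa [hrle])

lemma trimF_of_head?_eq {z : List ℕ} (h : z.head? = some b) : trimF b z = z := by
  cases z with
  | nil => rfl
  | cons t ts => cases Option.some_inj.mp h; simp [trimF]

lemma trimEnds_of_head?_of_getLast? {z : List ℕ} (h₁ : z.head? = some b)
    (h₂ : z.getLast? = some b) : trimEnds b z = z := by
  rw [trimEnds, trimF_of_head?_eq h₁, trimF_of_head?_eq (by rwa [head?_reverse]), reverse_reverse]

lemma trimEnds_append_singleton {z : List ℕ} {t : ℕ} (h : z.head? = some b) (ht : t < b) :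
    trimEnds b (z ++ [t]) = z := by
  have hz : z ≠ [] := by rintro rfl; simp at h
  have hhead : (z ++ [t]).head? = some b := by rwa [head?_append_of_ne_nil _ hz]
  rw [trimEnds, trimF_of_head?_eq hhead, reverse_append]
  simp [trimF, ht]

end Smooth

local notation "Δ⁻¹" => dinv 3 1

lemma wordOver_iterate_dinv {z : List ℕ} (hz : WordOver 1 3 z) (n : ℕ) :
    WordOver 1 3 (Δ⁻¹^[n] z) := by
  cases n with
  | zero => exact hz
  | succ n => rw [Function.iterate_succ_apply']; exact wordOver_dinv _

lemma iterate_dinv_lpow {u : List ℕ} (hu : WordOver 1 3 u) (he : Even u.length) (k n : ℕ) :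
    Δ⁻¹^[n] (lpow u k) = lpow (Δ⁻¹^[n] u) k := by
  induction n generalizing u with
  | zero => rfl
  | succ n ih =>
    have hodd := WordOver.odd hu odd_one (by decide)
    rw [Function.iterate_succ_apply, Function.iterate_succ_apply, dinv_lpow he,
      ih (wordOver_dinv u) ((even_length_dinv_iff hodd).mpr he)]

lemma injective_iterate_dinv {u : List ℕ} (hu : WordOver 1 3 u) (h3 : 3 ∈ u) :
    Function.Injective fun n => Δ⁻¹^[n] u := by
  have inv : ∀ n, WordOver 1 3 (Δ⁻¹^[n] u) ∧ 3 ∈ Δ⁻¹^[n] u := by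
    intro n
    induction n with
    | zero => exact ⟨hu, h3⟩
    | succ n ih =>
      rw [Function.iterate_succ_apply']
      exact ⟨wordOver_dinv _, mem_of_mem_head?
        (head?_dinv (ne_nil_of_mem ih.2) (WordOver.pos ih.1 one_pos (by decide)))⟩
  have hlen : StrictMono fun n => (Δ⁻¹^[n] u).length := by
    refine strictMono_nat_of_lt_succ fun n => ?_
    simp only [Function.iterate_succ_apply']
    exact length_lt_length_dinv (WordOver.pos (inv n).1 one_pos (by decide))
      ⟨3, (inv n).2, by decide⟩
  exact fun m n h => hlen.injective (congrArg length h)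

def OddStartingWithThree (z : List ℕ) : Prop :=
  WordOver 1 3 z ∧ z.head? = some 3 ∧ ¬Even z.length

lemma oddStartingWithThree_dinv {z : List ℕ} (h : OddStartingWithThree z) :
    OddStartingWithThree (Δ⁻¹ z) := by
  obtain ⟨hw, hhead, hodd⟩ := h
  exact ⟨wordOver_dinv z, head?_dinv (ne_nil_of_mem (mem_of_mem_head? hhead))
    (WordOver.pos hw one_pos (by decide)),
    by rwa [even_length_dinv_iff (WordOver.odd hw odd_one (by decide))]⟩

lemma oddStartingWithThree_iterate_dinv {z : List ℕ} (h : OddStartingWithThree z) (n : ℕ) :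
    OddStartingWithThree (Δ⁻¹^[n] z) := by
  induction n with
  | zero => exact h
  | succ n ih => rw [Function.iterate_succ_apply']; exact oddStartingWithThree_dinv ih

lemma trimEnds_dinv_of_oddStartingWithThree {z : List ℕ} (h : OddStartingWithThree z) :
    trimEnds 3 (Δ⁻¹ z) = Δ⁻¹ z := by
  obtain ⟨hw, hhead, hodd⟩ := h
  have hne : z ≠ [] := ne_nil_of_mem (mem_of_mem_head? hhead)
  have hpos := WordOver.pos hw one_pos (by decide)
  refine trimEnds_of_head?_of_getLast? (head?_dinv hne hpos) ?_
  have hlen : Even z.dropLast.length := by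
    obtain ⟨k, hk⟩ := Nat.not_even_iff_odd.mp hodd
    simp [length_dropLast, hk]
  rw [← dropLast_append_getLast hne, getLast?_dinv_append_singleton _ (hpos _ (getLast_mem hne)),
    if_pos hlen]

lemma smoothChain_iterate_dinv {z : List ℕ} (hz : OddStartingWithThree z)
    (h₀ : SmoothChain 1 3 z) (h₁ : SmoothChain 1 3 (trimEnds 3 z)) (m : ℕ) :
    SmoothChain 1 3 (Δ⁻¹^[m] z) := by
  have tail : ∀ n, SmoothChain 1 3 (Δ⁻¹^[n + 1] z) := by
    intro n
    induction n with
    | zero => exact smoothChain_dinv_of_trimEnds (by decide) one_pos (by decide) hz.1 h₁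
    | succ n ih =>
      have hfix : trimEnds 3 (Δ⁻¹^[n + 1] z) = Δ⁻¹^[n + 1] z := by
        rw [Function.iterate_succ_apply']
        exact trimEnds_dinv_of_oddStartingWithThree (oddStartingWithThree_iterate_dinv hz n)
      rw [Function.iterate_succ_apply']
      exact smoothChain_dinv_of_trimEnds (by decide) one_pos (by decide)
        (oddStartingWithThree_iterate_dinv hz (n + 1)).1 (by rwa [hfix])
  cases m with
  | zero => exact h₀
  | succ m => exact tail m

def baseWord : List ℕ := [1, 1, 1, 3, 1, 3, 1, 1, 1, 3]

def tailSeed : List ℕ := (Δ⁻¹ (lpow baseWord 4)).dropLast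

lemma oddStartingWithThree_tailSeed : OddStartingWithThree tailSeed :=
  ⟨by decide, rfl, by decide⟩

lemma smoothChain_lpow_baseWord : SmoothChain 1 3 (lpow baseWord 4) :=
  smoothChain_of_iterate_eq_nil 6 (by decide) (by decide)

lemma smoothChain_trimEnds_lpow_baseWord : SmoothChain 1 3 (trimEnds 3 (lpow baseWord 4)) :=
  smoothChain_of_iterate_eq_nil 7 (by decide) (by decide)

lemma smoothChain_tailSeed : SmoothChain 1 3 tailSeed :=
  smoothChain_of_iterate_eq_nil 7 (by decide) (by decide)

lemma smoothChain_trimEnds_tailSeed : SmoothChain 1 3 (trimEnds 3 tailSeed) :=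
  smoothChain_of_iterate_eq_nil 7 (by decide) (by decide)

lemma iterate_dinv_lpow_baseWord (n : ℕ) :
    Δ⁻¹^[n + 1] (lpow baseWord 4) = Δ⁻¹^[n] tailSeed ++ [1] := by
  induction n with
  | zero => decide
  | succ n ih =>
    have hodd := (oddStartingWithThree_iterate_dinv oddStartingWithThree_tailSeed n).2.2
    rw [Function.iterate_succ_apply', ih, dinv_append, if_neg hodd,
      Function.iterate_succ_apply']
    rfl

lemma smoothW_iterate_dinv_lpow_baseWord (n : ℕ) : SmoothW 1 3 (Δ⁻¹^[n] (lpow baseWord 4)) := by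
  refine ⟨wordOver_iterate_dinv (by decide) n, show SmoothChain 1 3 _ from ?_⟩
  cases n with
  | zero => exact smoothChain_lpow_baseWord
  | succ n =>
    rw [Function.iterate_succ_apply']
    refine smoothChain_dinv_of_trimEnds (by decide) one_pos (by decide)
      (wordOver_iterate_dinv (by decide) n) ?_
    cases n with
    | zero => exact smoothChain_trimEnds_lpow_baseWord
    | succ n =>
      have htail := oddStartingWithThree_iterate_dinv oddStartingWithThree_tailSeed n
      rw [iterate_dinv_lpow_baseWord, trimEnds_append_singleton htail.2.1 (by decide)]
      exact smoothChain_iterate_dinv oddStartingWithThree_tailSeed smoothChain_tailSeed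
        smoothChain_trimEnds_tailSeed n

end SmoothWords

open SmoothWords in
theorem stmt15 :
    SmoothW 1 3 (lpow [1,1,1,3,1,3,1,1,1,3] 4) ∧
    {u : List ℕ | SmoothW 1 3 (lpow u 4)}.Infinite := by
  have smooth : ∀ n, SmoothW 1 3 (lpow ((dinv 3 1)^[n] baseWord) 4) := fun n => by
    rw [← iterate_dinv_lpow (by decide) (by decide)]
    exact smoothW_iterate_dinv_lpow_baseWord n
  exact ⟨smooth 0,
    Set.infinite_of_injective_forall_mem (injective_iterate_dinv (by decide) (by decide)) smooth⟩
end

section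
/- Let u be a nonempty word over {a,b} where a and b are positive integers of the same parity, and suppose u has even length. Then for all positive integers k and n, Δ_α^{-k}(uⁿ) = (Δ_α^{-k}(u))ⁿ, and Δ_α^{-k}(u) has even length. -/
/-!
Δ_α^{-1} restarts its alternation with α after every factor of even length, so it maps a
concatenation `u ++ v` with `u` of even length to `Δ_α^{-1}(u) ++ Δ_α^{-1}(v)`; in particular it
commutes with powers of an even-length word. Evenness of length propagates along the iteration:
`Δ_α^{-1}(w)` has length `w.sum`, which is even when `w` has even length and entries of a common
parity, and `Δ_α^{-1}(w)` is again a word over `{α, β}`, whose letters share a parity.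
-/

lemma dinv_append (u v : List ℕ) (α β : ℕ) :
    dinv α β (u ++ v) = dinv α β u ++ if Even u.length then dinv α β v else dinv β α v := by
  induction u generalizing α β with
  | nil => simp [dinv]
  | cons x t ih => by_cases h : Even t.length <;> simp [dinv, ih, h, Nat.even_add_one]

lemma dinv_append_of_even_length {u : List ℕ} (v : List ℕ) (α β : ℕ) (h : Even u.length) :
    dinv α β (u ++ v) = dinv α β u ++ dinv α β v := by
  simp [dinv_append, h]

lemma lpow_succ (u : List ℕ) (n : ℕ) : lpow u (n + 1) = u ++ lpow u n := by
  simp [lpow, List.replicate_succ]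

lemma dinv_lpow {u : List ℕ} (α β n : ℕ) (h : Even u.length) :
    dinv α β (lpow u n) = lpow (dinv α β u) n := by
  induction n with
  | zero => simp [lpow, dinv]
  | succ m ih => rw [lpow_succ, dinv_append_of_even_length _ _ _ h, ih, lpow_succ]

lemma length_dinv (u : List ℕ) (α β : ℕ) : (dinv α β u).length = u.sum := by
  induction u generalizing α β with
  | nil => simp [dinv]
  | cons x t ih => simp [dinv, ih]

lemma wordOver_dinv (u : List ℕ) (α β : ℕ) : WordOver α β (dinv α β u) := by
  induction u generalizing α β with
  | nil => simp [WordOver, dinv]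
  | cons x t ih =>
    intro c hc
    simp only [dinv, List.mem_append, List.mem_replicate] at hc
    rcases hc with ⟨-, rfl⟩ | hc
    · exact .inl rfl
    · exact (ih β α c hc).symm

lemma even_sum_of_forall_mod_two_eq {l : List ℕ} {p : ℕ} (hl : ∀ c ∈ l, c % 2 = p)
    (h : Even l.length) : Even l.sum := by
  have hmod : l.map (· % 2) = List.replicate l.length p := by
    simpa [List.eq_replicate_iff] using hl
  rw [Nat.even_iff, List.sum_nat_mod, hmod, List.sum_replicate, smul_eq_mul,
    ← Nat.even_iff]
  exact h.mul_right p

lemma even_length_iterate_dinv {α β p : ℕ} (hαβ : α % 2 = β % 2) {u : List ℕ}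
    (hu : ∀ c ∈ u, c % 2 = p) (h : Even u.length) (k : ℕ) :
    Even ((dinv α β)^[k] u).length := by
  induction k generalizing u p with
  | zero => exact h
  | succ k ih =>
    rw [Function.iterate_succ_apply]
    refine ih (p := α % 2) (fun c hc => ?_) ?_
    · rcases wordOver_dinv u α β c hc with rfl | rfl <;> simp [hαβ]
    · rw [length_dinv]
      exact even_sum_of_forall_mod_two_eq hu h

lemma iterate_dinv_lpow {α β : ℕ} {u : List ℕ}
    (h : ∀ k, Even ((dinv α β)^[k] u).length) (k n : ℕ) :
    (dinv α β)^[k] (lpow u n) = lpow ((dinv α β)^[k] u) n := by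
  induction k with
  | zero => rfl
  | succ k ih => rw [Function.iterate_succ_apply', ih, dinv_lpow _ _ _ (h k),
      ← Function.iterate_succ_apply' (dinv α β)]

theorem stmt17_general (a b : ℕ) (hpar : a % 2 = b % 2)
    (u : List ℕ) (hw : WordOver a b u) (hev : Even u.length)
    (α β : ℕ) (hαβ : (α = a ∧ β = b) ∨ (α = b ∧ β = a)) :
    ∀ k n : ℕ, 0 < k → 0 < n →
      (dinv α β)^[k] (lpow u n) = lpow ((dinv α β)^[k] u) n ∧
      Even ((dinv α β)^[k] u).length := by
  have hαβ_mod : α % 2 = β % 2 := by rcases hαβ with ⟨rfl, rfl⟩ | ⟨rfl, rfl⟩ <;> omega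
  have hu : ∀ c ∈ u, c % 2 = a % 2 := fun c hc => by rcases hw c hc with rfl | rfl <;> omega
  have heven := even_length_iterate_dinv hαβ_mod hu hev
  intro k n _ _
  exact ⟨iterate_dinv_lpow heven k n, heven k⟩

theorem stmt17 (a b : ℕ) (ha : 0 < a) (hab : a < b) (hpar : a % 2 = b % 2)
    (u : List ℕ) (hne : u ≠ []) (hw : WordOver a b u) (hev : Even u.length)
    (α β : ℕ) (hαβ : (α = a ∧ β = b) ∨ (α = b ∧ β = a)) :
    ∀ k n : ℕ, 0 < k → 0 < n →
      (dinv α β)^[k] (lpow u n) = lpow ((dinv α β)^[k] u) n ∧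
      Even ((dinv α β)^[k] u).length :=
  stmt17_general a b hpar u hw hev α β hαβ
end
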